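/- The Clayton copula is pointwise increasing in θ: for 0 < θ₁ ≤ θ₂ and all u, v ∈ (0,1), (u^(-θ₁) + v^(-θ₁) - 1)^(-1/θ₁) ≤ (u^(-θ₂) + v^(-θ₂) - 1)^(-1/θ₂). -/
import Mathlib

open Real

/-- Superadditivity of `rpow` for exponent `≥ 1` on nonnegative reals. -/
lemma real_add_rpow_le_rpow_add {x y p : ℝ} (hx : 0 ≤ x) (hy : 0 ≤ y) (hp : 1 ≤ p) :
    x ^ p + y ^ p ≤ (x + y) ^ p := by
  have h := NNReal.add_rpow_le_rpow_add x.toNNReal y.toNNReal hp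
  have := NNReal.coe_le_coe.mpr h
  push_cast [NNReal.coe_rpow] at this
  rwa [Real.coe_toNNReal x hx, Real.coe_toNNReal y hy] at this

lemma key_ineq {a b p : ℝ} (ha : 1 ≤ a) (hb : 1 ≤ b) (hp : 1 ≤ p) :
    a ^ p + b ^ p - 1 ≤ (a + b - 1) ^ p := by
  rcases eq_or_lt_of_le hb with rfl | hb1
  · simp [Real.one_rpow]
  rcases eq_or_lt_of_le ha with rfl | ha1
  · rw [Real.one_rpow]
    have : (1 : ℝ) + b - 1 = b := by ring
    rw [this]; linarith
  have hcvx := convexOn_rpow hp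
  have hz : 1 < a + b - 1 := by linarith
  have hbz : b ≤ a + b - 1 := by linarith
  have h1 := hcvx.secant_mono (a := 1) (x := b) (y := a + b - 1)
    (by simp only [Set.mem_Ici]; linarith) (by simp only [Set.mem_Ici]; linarith) (by simp only [Set.mem_Ici]; linarith)
    (by intro h; rw [h] at hb1; linarith) (by intro h; rw [h] at hz; linarith) hbz
  have h2 := hcvx.secant_mono (a := a + b - 1) (x := 1) (y := a)
    (by simp only [Set.mem_Ici]; linarith) (by simp only [Set.mem_Ici]; linarith) (by simp only [Set.mem_Ici]; linarith)
    (by intro h; rw [← h] at hz; linarith) (by intro h; nlinarith [h]) (by linarith)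
  simp only [Real.one_rpow] at h1 h2
  set z := a + b - 1 with hzdef
  rw [show (1 : ℝ) - z ^ p = -(z ^ p - 1) by ring, show (1 : ℝ) - z = -(z - 1) by ring,
    neg_div_neg_eq,
    show a ^ p - z ^ p = -(z ^ p - a ^ p) by ring, show a - z = -(z - a) by ring,
    neg_div_neg_eq, show z - a = b - 1 by rw [hzdef]; ring] at h2
  have hchain : (b ^ p - 1) / (b - 1) ≤ (z ^ p - a ^ p) / (b - 1) := by
    calc (b ^ p - 1) / (b - 1) ≤ (z ^ p - 1) / (z - 1) := h1
    _ ≤ (z ^ p - a ^ p) / (b - 1) := h2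
  have hb0 : (0 : ℝ) < b - 1 := by linarith
  rw [div_le_div_iff_of_pos_right hb0] at hchain
  linarith

/-- The Clayton copula is pointwise increasing in `θ`. -/
theorem clayton_copula_monotone_in_theta (θ₁ θ₂ : ℝ) (h₁ : 0 < θ₁) (h₁₂ : θ₁ ≤ θ₂)
    (u v : ℝ) (hu : u ∈ Set.Ioo (0 : ℝ) 1) (hv : v ∈ Set.Ioo (0 : ℝ) 1) :
    (u ^ (-θ₁) + v ^ (-θ₁) - 1) ^ (-1 / θ₁) ≤
      (u ^ (-θ₂) + v ^ (-θ₂) - 1) ^ (-1 / θ₂) := by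
  obtain ⟨hu0, hu1⟩ := hu
  obtain ⟨hv0, hv1⟩ := hv
  have h₂ : 0 < θ₂ := lt_of_lt_of_le h₁ h₁₂
  set p := θ₂ / θ₁ with hp_def
  have hp : 1 ≤ p := (one_le_div h₁).mpr h₁₂
  have ha : 1 ≤ u ^ (-θ₁) :=
    Real.one_le_rpow_of_pos_of_le_one_of_nonpos hu0 hu1.le (by linarith)
  have hb : 1 ≤ v ^ (-θ₁) :=
    Real.one_le_rpow_of_pos_of_le_one_of_nonpos hv0 hv1.le (by linarith)
  have hexp : ∀ w : ℝ, 0 < w → (w ^ (-θ₁)) ^ p = w ^ (-θ₂) := by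
    intro w hw
    rw [← Real.rpow_mul hw.le, hp_def]
    congr 1
    field_simp
  have hkey : u ^ (-θ₂) + v ^ (-θ₂) - 1 ≤ (u ^ (-θ₁) + v ^ (-θ₁) - 1) ^ p := by
    rw [← hexp u hu0, ← hexp v hv0]
    exact key_ineq ha hb hp
  have hS2 : (0 : ℝ) < u ^ (-θ₂) + v ^ (-θ₂) - 1 := by
    have ha2 : 1 ≤ u ^ (-θ₂) :=
      Real.one_le_rpow_of_pos_of_le_one_of_nonpos hu0 hu1.le (by linarith)
    have hb2 : 1 ≤ v ^ (-θ₂) :=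
      Real.one_le_rpow_of_pos_of_le_one_of_nonpos hv0 hv1.le (by linarith)
    linarith
  have hneg : (-1/θ₂ : ℝ) ≤ 0 := by
    rw [neg_div]
    exact neg_nonpos.mpr (by positivity)
  have hmono := Real.rpow_le_rpow_of_nonpos hS2 hkey hneg
  have hS1 : (0 : ℝ) < u ^ (-θ₁) + v ^ (-θ₁) - 1 := by linarith
  rwa [← Real.rpow_mul hS1.le, show p * (-1/θ₂) = -1/θ₁ by
    rw [hp_def]; field_simp] at hmono
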